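/- Let κ₁ : 𝔹^m → 𝔹 be non-constant, κ₂ its variable-renamed copy on a disjoint block, and define κ : 𝔹^{2m+2} → 𝔹 by: κ = κ₁(y) ∧ κ₂(z) if x_{n-1}=0; κ = κ₁(y) if x_{n-1}=1, x_n=0; κ = κ₂(z) if x_{n-1}=1, x_n=1 (n = 2m+2). For v = (u, u, 1, 1) with κ₁(u)=0: the Shapley value Sv(n) of feature n equals 0 while feature n is relevant. -/

import Mathlib

open Finset

/-- `X` is a weak abductive explanation (weak AXp) for classifier `κ` at point `v`:
every point agreeing with `v` on `X` gets the same prediction as `v`. -/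
def weakAXp {n : ℕ} (κ : (Fin n → Bool) → Bool) (v : Fin n → Bool)
    (X : Finset (Fin n)) : Prop :=
  ∀ x : Fin n → Bool, (∀ i ∈ X, x i = v i) → κ x = κ v

/-- `X` is an AXp: a subset-minimal weak AXp. -/
def AXp {n : ℕ} (κ : (Fin n → Bool) → Bool) (v : Fin n → Bool)
    (X : Finset (Fin n)) : Prop :=
  weakAXp κ v X ∧ ∀ X' ⊂ X, ¬ weakAXp κ v X'

/-- `Y` is a weak contrastive explanation (weak CXp) for `κ` at `v`:
some point agreeing with `v` outside `Y` gets a different prediction. -/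
def weakCXp {n : ℕ} (κ : (Fin n → Bool) → Bool) (v : Fin n → Bool)
    (Y : Finset (Fin n)) : Prop :=
  ∃ x : Fin n → Bool, (∀ i ∉ Y, x i = v i) ∧ κ x ≠ κ v

/-- `Y` is a CXp: a subset-minimal weak CXp. -/
def CXp {n : ℕ} (κ : (Fin n → Bool) → Bool) (v : Fin n → Bool)
    (Y : Finset (Fin n)) : Prop :=
  weakCXp κ v Y ∧ ∀ Y' ⊂ Y, ¬ weakCXp κ v Y'

/-- A feature is relevant if it occurs in some AXp. -/
def Relevant {n : ℕ} (κ : (Fin n → Bool) → Bool) (v : Fin n → Bool) (i : Fin n) : Prop :=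
  ∃ X, AXp κ v X ∧ i ∈ X

/-- A feature is irrelevant if it occurs in no AXp. -/
def Irrelevant {n : ℕ} (κ : (Fin n → Bool) → Bool) (v : Fin n → Bool) (i : Fin n) : Prop :=
  ¬ Relevant κ v i

/-- `phi κ v S` : average value of `κ` over points agreeing with `v` on `S`
(uniform distribution). -/
noncomputable def phi {n : ℕ} (κ : (Fin n → Bool) → Bool) (v : Fin n → Bool)
    (S : Finset (Fin n)) : ℝ :=
  (1 / 2 ^ (n - S.card)) *
    ∑ x ∈ Finset.univ.filter (fun x : Fin n → Bool => ∀ i ∈ S, x i = v i),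
      (if κ x then (1 : ℝ) else 0)

/-- Shapley value of feature `i` for classifier `κ` at point `v`. -/
noncomputable def Sv {n : ℕ} (κ : (Fin n → Bool) → Bool) (v : Fin n → Bool)
    (i : Fin n) : ℝ :=
  ∑ S ∈ (Finset.univ.erase i).powerset,
    ((S.card.factorial * (n - S.card - 1).factorial : ℝ) / n.factorial) *
      (phi κ v (insert i S) - phi κ v S)


namespace Stmt15Aux

lemma omega_a1 (m : ℕ) : 2*m < 2*m+2 := by omega
lemma omega_a2 (m : ℕ) : m ≤ 2*m+2 := by omega
lemma omega_a3 (m : ℕ) : m + m ≤ 2*m+2 := by omega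
lemma omega_a4 (m : ℕ) (j : Fin (2*m+2)) (h : ¬ (j : ℕ) < m) (h2 : (j : ℕ) < m + m) :
    (j : ℕ) - m < m := by omega

def sw (m : ℕ) (j : Fin (2*m+2)) : Fin (2*m+2) :=
  if h : (j:ℕ) < m then ⟨(j:ℕ) + m, by omega⟩
  else if h2 : (j:ℕ) < m + m then ⟨(j:ℕ) - m, by omega⟩
  else j

lemma sw_val (m : ℕ) (j : Fin (2*m+2)) : (sw m j : ℕ) =
    if (j:ℕ) < m then (j:ℕ) + m else if (j:ℕ) < m + m then (j:ℕ) - m else j := by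
  unfold sw; split_ifs <;> rfl

lemma sw_sw (m : ℕ) (j : Fin (2*m+2)) : sw m (sw m j) = j := by
  apply Fin.ext
  rw [sw_val, sw_val]
  have := j.isLt
  split_ifs <;> omega

lemma sw_inj (m : ℕ) : Function.Injective (sw m) := by
  intro a b h
  rw [← sw_sw m a, h, sw_sw]

lemma sw_q (m : ℕ) : sw m (Fin.last (2*m+1)) = Fin.last (2*m+1) := by
  apply Fin.ext
  rw [sw_val]
  simp only [Fin.val_last]
  split_ifs <;> omega

lemma sw_ne_q (m : ℕ) {j : Fin (2*m+2)} (h : j ≠ Fin.last (2*m+1)) :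
    sw m j ≠ Fin.last (2*m+1) := by
  intro hj
  apply h
  have := sw_sw m j
  rw [hj, sw_q] at this
  exact this.symm

def sg (m : ℕ) (x : Fin (2*m+2) → Bool) : Fin (2*m+2) → Bool :=
  fun j => if j = Fin.last (2*m+1) then !(x j) else x (sw m j)

lemma sg_ne (m : ℕ) (x : Fin (2*m+2) → Bool) {j : Fin (2*m+2)}
    (h : j ≠ Fin.last (2*m+1)) : sg m x j = x (sw m j) := if_neg h

lemma sg_q (m : ℕ) (x : Fin (2*m+2) → Bool) :
    sg m x (Fin.last (2*m+1)) = !(x (Fin.last (2*m+1))) := if_pos rfl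

lemma sg_sg (m : ℕ) (x : Fin (2*m+2) → Bool) : sg m (sg m x) = x := by
  funext j
  unfold sg
  by_cases hj : j = Fin.last (2*m+1)
  · simp [hj]
  · simp only [if_neg hj, if_neg (sw_ne_q m hj), sw_sw]

def V (m : ℕ) (u : Fin m → Bool) (t : ℕ) : Bool :=
  if h : t < m then u ⟨t, h⟩ else if h2 : t < m + m then u ⟨t - m, by omega⟩ else true

lemma V_add (m : ℕ) (u : Fin m → Bool) (t : ℕ) (h : t < m) :
    V m u (t + m) = V m u t := by
  unfold V
  rw [dif_neg (by omega), dif_pos (by omega : t + m < m + m), dif_pos h]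
  congr 1
  apply Fin.ext
  simp

section WithV

variable (m : ℕ) (u : Fin m → Bool) (v : Fin (2 * m + 2) → Bool)
    (hv : ∀ j : Fin (2 * m + 2), v j =
      if h : (j : ℕ) < m then u ⟨j, h⟩
      else if h2 : (j : ℕ) < m + m then u ⟨(j : ℕ) - m, omega_a4 m j h h2⟩
      else true)

include hv

lemma v_eq_V (j : Fin (2*m+2)) : v j = V m u (j : ℕ) := by
  rw [hv]; rfl

lemma v_sw (j : Fin (2*m+2)) : v (sw m j) = v j := by
  rw [v_eq_V m u v hv, v_eq_V m u v hv, sw_val]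
  rcases Nat.lt_or_ge (j:ℕ) m with h | h
  · rw [if_pos h, V_add m u _ h]
  · rcases Nat.lt_or_ge (j:ℕ) (m+m) with h2 | h2
    · rw [if_neg (by omega), if_pos h2]
      have h3 : (j:ℕ) - m < m := by omega
      have h4 : (j:ℕ) - m + m = (j:ℕ) := by omega
      have h5 := V_add m u ((j:ℕ) - m) h3
      rw [h4] at h5
      exact h5.symm
    · rw [if_neg (by omega), if_neg (by omega)]

lemma v_q : v (Fin.last (2*m+1)) = true := by
  rw [v_eq_V m u v hv]
  unfold V
  rw [dif_neg (by simp [Fin.last]; omega), dif_neg (by simp [Fin.last]; omega)]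

lemma v_p : v ⟨2*m, omega_a1 m⟩ = true := by
  rw [v_eq_V m u v hv]
  have hval : ((⟨2*m, omega_a1 m⟩ : Fin (2*m+2)) : ℕ) = 2*m := rfl
  rw [hval]
  unfold V
  rw [dif_neg (by omega), dif_neg (by omega)]

lemma v_z : (fun i => v (Fin.castLE (omega_a3 m) (Fin.natAdd m i))) = u := by
  funext i
  rw [v_eq_V m u v hv]
  have hval : ((Fin.castLE (omega_a3 m) (Fin.natAdd m i)) : ℕ) = m + (i:ℕ) := rfl
  rw [hval]
  unfold V
  have := i.isLt
  rw [dif_neg (by omega), dif_pos (by omega : m + (i:ℕ) < m + m)]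
  congr 1
  apply Fin.ext
  simp

end WithV

lemma kappa_sg (m : ℕ) (κ₁ : (Fin m → Bool) → Bool)
    (κ : (Fin (2 * m + 2) → Bool) → Bool)
    (hκ : ∀ x, κ x =
      if x ⟨2 * m, omega_a1 m⟩ = false then
        (κ₁ (fun i => x (Fin.castLE (omega_a2 m) i)) &&
         κ₁ (fun i => x (Fin.castLE (omega_a3 m) (Fin.natAdd m i))))
      else if x (Fin.last (2 * m + 1)) = false then
        κ₁ (fun i => x (Fin.castLE (omega_a2 m) i))
      else κ₁ (fun i => x (Fin.castLE (omega_a3 m) (Fin.natAdd m i))))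
    (x : Fin (2*m+2) → Bool) : κ (sg m x) = κ x := by
  have hplast : (⟨2*m, omega_a1 m⟩ : Fin (2*m+2)) ≠ Fin.last (2*m+1) := by
    simp [Fin.ext_iff, Fin.last]
  have h_p : sg m x ⟨2*m, omega_a1 m⟩ = x ⟨2*m, omega_a1 m⟩ := by
    rw [sg_ne m x hplast]
    congr 1
    apply Fin.ext
    rw [sw_val]
    split_ifs <;> simp_all <;> omega
  have h_q : sg m x (Fin.last (2*m+1)) = !(x (Fin.last (2*m+1))) := if_pos rfl
  have h_y : (fun i => sg m x (Fin.castLE (omega_a2 m) i)) =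
      (fun i => x (Fin.castLE (omega_a3 m) (Fin.natAdd m i))) := by
    funext i
    have hne : (Fin.castLE (omega_a2 m) i) ≠ Fin.last (2*m+1) := by
      simp [Fin.ext_iff, Fin.last]; omega
    rw [sg_ne m x hne]
    congr 1
    apply Fin.ext
    rw [sw_val]
    have := i.isLt
    split_ifs <;> simp_all <;> omega
  have h_z : (fun i => sg m x (Fin.castLE (omega_a3 m) (Fin.natAdd m i))) =
      (fun i => x (Fin.castLE (omega_a2 m) i)) := by
    funext i
    have hne : (Fin.castLE (omega_a3 m) (Fin.natAdd m i)) ≠ Fin.last (2*m+1) := by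
      simp [Fin.ext_iff, Fin.last]; omega
    rw [sg_ne m x hne]
    congr 1
    apply Fin.ext
    rw [sw_val]
    have := i.isLt
    split_ifs <;> simp_all <;> omega
  rw [hκ (sg m x), hκ x, h_p, h_q, h_y, h_z]
  cases hp : x ⟨2*m, omega_a1 m⟩ <;> cases hq : x (Fin.last (2*m+1)) <;>
    simp only [Bool.not_true, Bool.not_false, reduceIte] <;>
    first | rfl | exact Bool.and_comm _ _

end Stmt15Aux

namespace Stmt15Aux

noncomputable def T (m : ℕ) (κ : (Fin (2*m+2) → Bool) → Bool) (v : Fin (2*m+2) → Bool)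
    (S : Finset (Fin (2*m+2))) : ℝ :=
  ∑ x ∈ Finset.univ.filter (fun x : Fin (2*m+2) → Bool => ∀ i ∈ S, x i = v i),
    (if κ x then (1 : ℝ) else 0)

lemma phi_eq (m : ℕ) (κ : (Fin (2*m+2) → Bool) → Bool) (v : Fin (2*m+2) → Bool)
    (S : Finset (Fin (2*m+2))) :
    phi κ v S = (1 / 2 ^ (2*m+2 - S.card)) * T m κ v S := rfl

lemma q_not_mem_image (m : ℕ) {S : Finset (Fin (2*m+2))} (hq : Fin.last (2*m+1) ∉ S) :
    Fin.last (2*m+1) ∉ S.image (sw m) := by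
  intro h
  obtain ⟨j, hj, hje⟩ := Finset.mem_image.1 h
  have : j ≠ Fin.last (2*m+1) := fun he => hq (he ▸ hj)
  exact sw_ne_q m this hje

section Sums

variable (m : ℕ) (κ₁ : (Fin m → Bool) → Bool)
    (κ : (Fin (2 * m + 2) → Bool) → Bool)
    (hκ : ∀ x, κ x =
      if x ⟨2 * m, omega_a1 m⟩ = false then
        (κ₁ (fun i => x (Fin.castLE (omega_a2 m) i)) &&
         κ₁ (fun i => x (Fin.castLE (omega_a3 m) (Fin.natAdd m i))))
      else if x (Fin.last (2 * m + 1)) = false then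
        κ₁ (fun i => x (Fin.castLE (omega_a2 m) i))
      else κ₁ (fun i => x (Fin.castLE (omega_a3 m) (Fin.natAdd m i))))
    (u : Fin m → Bool) (v : Fin (2 * m + 2) → Bool)
    (hv : ∀ j : Fin (2 * m + 2), v j =
      if h : (j : ℕ) < m then u ⟨j, h⟩
      else if h2 : (j : ℕ) < m + m then u ⟨(j : ℕ) - m, omega_a4 m j h h2⟩
      else true)

include hκ hv

lemma T_swap {S : Finset (Fin (2*m+2))} (hq : Fin.last (2*m+1) ∉ S) :
    T m κ v S = T m κ v (S.image (sw m)) := by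
  unfold T
  refine Finset.sum_bij' (fun x _ => sg m x) (fun x _ => sg m x) ?_ ?_ ?_ ?_ ?_
  · intro x hx
    rw [Finset.mem_filter] at hx ⊢
    refine ⟨Finset.mem_univ _, ?_⟩
    intro i hi
    obtain ⟨j, hj, rfl⟩ := Finset.mem_image.1 hi
    have hjq : j ≠ Fin.last (2*m+1) := fun he => hq (he ▸ hj)
    rw [sg_ne m x (sw_ne_q m hjq), sw_sw, v_sw m u v hv]
    exact hx.2 j hj
  · intro x hx
    rw [Finset.mem_filter] at hx ⊢
    refine ⟨Finset.mem_univ _, ?_⟩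
    intro i hi
    have hiq : i ≠ Fin.last (2*m+1) := fun he => hq (he ▸ hi)
    rw [sg_ne m x hiq, ← v_sw m u v hv i]
    exact hx.2 (sw m i) (Finset.mem_image_of_mem _ hi)
  · intro x _; exact sg_sg m x
  · intro x _; exact sg_sg m x
  · intro x _
    rw [kappa_sg m κ₁ κ hκ x]

lemma T_split {S : Finset (Fin (2*m+2))} (hq : Fin.last (2*m+1) ∉ S) :
    T m κ v (insert (Fin.last (2*m+1)) S) +
      T m κ v (insert (Fin.last (2*m+1)) (S.image (sw m))) = T m κ v S := by
  classical
  have hvq := v_q m u v hv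
  have e1 : Finset.univ.filter
        (fun x : Fin (2*m+2) → Bool => ∀ i ∈ insert (Fin.last (2*m+1)) S, x i = v i)
      = (Finset.univ.filter (fun x : Fin (2*m+2) → Bool => ∀ i ∈ S, x i = v i)).filter
          (fun x => x (Fin.last (2*m+1)) = true) := by
    ext x
    simp only [Finset.mem_filter, Finset.mem_univ, true_and, Finset.forall_mem_insert, hvq]
    tauto
  have e2 : T m κ v (insert (Fin.last (2*m+1)) (S.image (sw m)))
      = ∑ x ∈ (Finset.univ.filter
          (fun x : Fin (2*m+2) → Bool => ∀ i ∈ S, x i = v i)).filter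
          (fun x => ¬ x (Fin.last (2*m+1)) = true),
          (if κ x then (1:ℝ) else 0) := by
    unfold T
    refine Finset.sum_bij' (fun x _ => sg m x) (fun x _ => sg m x) ?_ ?_ ?_ ?_ ?_
    · intro x hx
      rw [Finset.mem_filter] at hx
      have hx2 := hx.2
      rw [Finset.forall_mem_insert] at hx2
      rw [Finset.mem_filter, Finset.mem_filter]
      refine ⟨⟨Finset.mem_univ _, ?_⟩, ?_⟩
      · intro i hi
        have hiq : i ≠ Fin.last (2*m+1) := fun he => hq (he ▸ hi)
        rw [sg_ne m x hiq, ← v_sw m u v hv i]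
        exact hx2.2 (sw m i) (Finset.mem_image_of_mem _ hi)
      · rw [sg_q, hx2.1, hvq]
        simp
    · intro x hx
      rw [Finset.mem_filter, Finset.mem_filter] at hx
      rw [Finset.mem_filter, Finset.forall_mem_insert]
      refine ⟨Finset.mem_univ _, ?_, ?_⟩
      · rw [sg_q, hvq]
        cases hxq : x (Fin.last (2*m+1))
        · rfl
        · exact absurd hxq hx.2
      · intro i hi
        obtain ⟨j, hj, rfl⟩ := Finset.mem_image.1 hi
        have hjq : j ≠ Fin.last (2*m+1) := fun he => hq (he ▸ hj)
        rw [sg_ne m x (sw_ne_q m hjq), sw_sw, v_sw m u v hv]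
        exact hx.1.2 j hj
    · intro x _; exact sg_sg m x
    · intro x _; exact sg_sg m x
    · intro x _
      rw [kappa_sg m κ₁ κ hκ x]
  rw [T, e1, e2]
  exact Finset.sum_filter_add_sum_filter_not _ _ _

end Sums

lemma exists_axp {n : ℕ} (κ : (Fin n → Bool) → Bool) (v : Fin n → Bool) :
    ∀ X : Finset (Fin n), weakAXp κ v X → ∃ X', X' ⊆ X ∧ AXp κ v X' := by
  intro X
  induction X using Finset.strongInductionOn with
  | _ X ih =>
    intro h
    by_cases hmin : ∃ X' ⊂ X, weakAXp κ v X'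
    · obtain ⟨X', hss, hw⟩ := hmin
      obtain ⟨X'', h1, h2⟩ := ih X' hss hw
      exact ⟨X'', h1.trans hss.subset, h2⟩
    · exact ⟨X, subset_rfl, h, fun X' hX' hw => hmin ⟨X', hX', hw⟩⟩

end Stmt15Aux

open Stmt15Aux

/-- Two-block construction with selectors: `κ = κ₁(y) ∧ κ₁(z)` if `x_{n-1}=0`;
`κ₁(y)` if `x_{n-1}=1, xₙ=0`; `κ₁(z)` if `x_{n-1}=1, xₙ=1` on `n = 2m+2` features.
For `v = (u,u,1,1)` with `κ₁ u = false`, feature `n` has Shapley value 0 yet is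
relevant. -/

theorem stmt15 (m : ℕ) (κ₁ : (Fin m → Bool) → Bool)
    (h1 : ∃ a b, κ₁ a ≠ κ₁ b) (u : Fin m → Bool) (hu : κ₁ u = false)
    (κ : (Fin (2 * m + 2) → Bool) → Bool)
    (hκ : ∀ x, κ x =
      if x ⟨2 * m, by omega⟩ = false then
        (κ₁ (fun i => x (Fin.castLE (by omega : m ≤ 2 * m + 2) i)) &&
         κ₁ (fun i => x (Fin.castLE (by omega) (Fin.natAdd m i))))
      else if x (Fin.last (2 * m + 1)) = false then
        κ₁ (fun i => x (Fin.castLE (by omega : m ≤ 2 * m + 2) i))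
      else κ₁ (fun i => x (Fin.castLE (by omega) (Fin.natAdd m i))))
    (v : Fin (2 * m + 2) → Bool)
    (hv : ∀ j : Fin (2 * m + 2), v j =
      if h : (j : ℕ) < m then u ⟨j, h⟩
      else if h2 : (j : ℕ) < m + m then u ⟨(j : ℕ) - m, by omega⟩
      else true) :
    Sv κ v (Fin.last (2 * m + 1)) = 0 ∧
      Relevant κ v (Fin.last (2 * m + 1)) := by
  classical
  have hvq := v_q m u v hv
  have hvp := v_p m u v hv
  have hvz := v_z m u v hv
  -- κ v = false
  have hκv : κ v = false := by
    rw [hκ v, if_neg (by rw [hvp]; simp), if_neg (by rw [hvq]; simp), hvz, hu]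
  constructor
  · -- Shapley value is zero
    have hmain : ∀ S ∈ (Finset.univ.erase (Fin.last (2*m+1))).powerset,
        ((S.card.factorial * (2*m+2 - S.card - 1).factorial : ℝ) / (Nat.factorial (2*m+2))) *
          (phi κ v (insert (Fin.last (2*m+1)) S) - phi κ v S) +
        (((S.image (sw m)).card.factorial *
            (2*m+2 - (S.image (sw m)).card - 1).factorial : ℝ) / (Nat.factorial (2*m+2))) *
          (phi κ v (insert (Fin.last (2*m+1)) (S.image (sw m))) - phi κ v (S.image (sw m))) = 0 := by
      intro S hS
      have hsub : S ⊆ Finset.univ.erase (Fin.last (2*m+1)) := Finset.mem_powerset.1 hS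
      have hqS : Fin.last (2*m+1) ∉ S := fun h => (Finset.mem_erase.1 (hsub h)).1 rfl
      have hqT : Fin.last (2*m+1) ∉ S.image (sw m) := q_not_mem_image m hqS
      have hcard : (S.image (sw m)).card = S.card := Finset.card_image_of_injective _ (sw_inj m)
      have hins1 : (insert (Fin.last (2*m+1)) S).card = S.card + 1 :=
        Finset.card_insert_of_notMem hqS
      have hins2 : (insert (Fin.last (2*m+1)) (S.image (sw m))).card = S.card + 1 := by
        rw [Finset.card_insert_of_notMem hqT, hcard]
      have herase : (Finset.univ.erase (Fin.last (2*m+1))).card = 2*m+1 := by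
        rw [Finset.card_erase_of_mem (Finset.mem_univ _)]
        simp
      have hcardS := Finset.card_le_card hsub
      rw [herase] at hcardS
      have hswap := T_swap m κ₁ κ hκ u v hv hqS
      have hsplit := T_split m κ₁ κ hκ u v hv hqS
      rw [phi_eq, phi_eq, phi_eq, phi_eq, hins1, hins2, hcard, ← hswap]
      set A := T m κ v (insert (Fin.last (2*m+1)) S) with hA
      set B := T m κ v (insert (Fin.last (2*m+1)) (S.image (sw m))) with hB
      set C := T m κ v S with hC
      have hBC : B = C - A := by linarith
      rw [hBC]
      have hexp : 2*m+2 - (S.card + 1) = 2*m+2 - S.card - 1 := by omega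
      have hpow : (2:ℝ) ^ (2*m+2 - S.card) = 2 ^ (2*m+2 - S.card - 1) * 2 := by
        have hee : 2*m+2 - S.card - 1 + 1 = 2*m+2 - S.card := by omega
        rw [← pow_succ, hee]
      rw [hexp, hpow]
      have hD : (2:ℝ) ^ (2*m+2 - S.card - 1) ≠ 0 := by positivity
      field_simp
      ring
    rw [Sv]
    apply Finset.sum_involution (fun S _ => S.image (sw m))
    · exact hmain
    · intro S hS hf heq
      have h0 := hmain S hS
      rw [heq] at h0
      exact hf (by linarith)
    · intro S hS
      have hcomp : (sw m) ∘ (sw m) = id := funext (sw_sw m)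
      rw [Finset.image_image, hcomp, Finset.image_id]
    · intro S hS
      rw [Finset.mem_powerset]
      intro x hx
      obtain ⟨j, hj, rfl⟩ := Finset.mem_image.1 hx
      have hsub : S ⊆ Finset.univ.erase (Fin.last (2*m+1)) := Finset.mem_powerset.1 hS
      have : j ≠ Fin.last (2*m+1) := fun h => (Finset.mem_erase.1 (hsub hj)).1 h
      exact Finset.mem_erase.2 ⟨sw_ne_q m this, Finset.mem_univ _⟩
  · -- Relevance
    obtain ⟨a, ha⟩ : ∃ a, κ₁ a = true := by
      obtain ⟨a, b, hab⟩ := h1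
      cases hca : κ₁ a
      · cases hcb : κ₁ b
        · exact absurd (hca.trans hcb.symm) hab
        · exact ⟨b, hcb⟩
      · exact ⟨a, hca⟩
    set X : Finset (Fin (2*m+2)) :=
      insert (Fin.last (2*m+1))
        (Finset.univ.filter fun j : Fin (2*m+2) => m ≤ (j:ℕ) ∧ (j:ℕ) < m + m) with hX
    have hwX : weakAXp κ v X := by
      intro x hx
      have hxq : x (Fin.last (2*m+1)) = true := by
        rw [hx _ (Finset.mem_insert_self _ _), hvq]
      have hxz : (fun i => x (Fin.castLE (by omega : m + m ≤ 2*m+2) (Fin.natAdd m i))) = u := by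
        funext i
        have hmem : (Fin.castLE (by omega : m + m ≤ 2*m+2) (Fin.natAdd m i)) ∈ X := by
          rw [hX]
          apply Finset.mem_insert_of_mem
          rw [Finset.mem_filter]
          have hval : ((Fin.castLE (by omega : m + m ≤ 2*m+2) (Fin.natAdd m i)) : ℕ)
              = m + (i:ℕ) := rfl
          have := i.isLt
          exact ⟨Finset.mem_univ _, by rw [hval]; omega, by rw [hval]; omega⟩
        rw [hx _ hmem]
        exact congrFun hvz i
      rw [hκ x, hκv]
      by_cases hp : x ⟨2*m, by omega⟩ = false
      · rw [if_pos hp, hxz, hu, Bool.and_false]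
      · rw [if_neg hp, if_neg (by rw [hxq]; simp), hxz, hu]
    obtain ⟨X', hX'sub, hAXp⟩ := exists_axp κ v X hwX
    refine ⟨X', hAXp, ?_⟩
    by_contra hqX'
    -- X' ⊆ the z-block; build a counterexample point
    set xw : Fin (2*m+2) → Bool := fun j =>
      if h : (j:ℕ) < m then a ⟨j, h⟩
      else if (j:ℕ) = 2*m then true
      else if (j:ℕ) = 2*m+1 then false
      else v j with hxw
    have hxwval : ∀ j : Fin (2*m+2), xw j =
        if h : (j:ℕ) < m then a ⟨j, h⟩
        else if (j:ℕ) = 2*m then true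
        else if (j:ℕ) = 2*m+1 then false
        else v j := fun j => rfl
    have hagree : ∀ i ∈ X', xw i = v i := by
      intro i hi
      have hiX := hX'sub hi
      have hiq : i ≠ Fin.last (2*m+1) := fun he => hqX' (he ▸ hi)
      have hiblock : m ≤ (i:ℕ) ∧ (i:ℕ) < m + m := by
        rcases Finset.mem_insert.1 hiX with h | h
        · exact absurd h hiq
        · exact (Finset.mem_filter.1 h).2
      rw [hxwval, dif_neg (by omega), if_neg (by omega), if_neg (by omega)]
    have hxwp : xw ⟨2*m, by omega⟩ = true := by
      rw [hxwval, show ((⟨2*m, by omega⟩ : Fin (2*m+2)) : ℕ) = 2*m from rfl,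
        dif_neg (by omega), if_pos rfl]
    have hxwq : xw (Fin.last (2*m+1)) = false := by
      rw [hxwval, show ((Fin.last (2*m+1)) : ℕ) = 2*m+1 from rfl,
        dif_neg (by omega), if_neg (by omega), if_pos rfl]
    have hxwy : (fun i => xw (Fin.castLE (by omega : m ≤ 2*m+2) i)) = a := by
      funext i
      rw [hxwval, show ((Fin.castLE (by omega : m ≤ 2*m+2) i) : ℕ) = (i:ℕ) from rfl,
        dif_pos i.isLt]
    have hκxw : κ xw = true := by
      rw [hκ xw, if_neg (by rw [hxwp]; simp), if_pos hxwq, hxwy, ha]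
    have := hAXp.1 xw hagree
    rw [hκxw, hκv] at this
    exact absurd this (by simp)
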